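/- Let A ∈ ℝ^{n×n}, B ∈ ℝ^{n×m}, C ∈ ℝ^{r×n}, D ∈ ℝ^{r×m} all have nonnegative entries and let γ > 0. Then: (a) the conditions 'A is Schur and (C(I−A)⁻¹B + D)·𝟏 < γ·𝟏 entrywise' hold if and only if there exists ξ ∈ ℝ^n with ξ ≥ 0 such that Aξ + B·𝟏 < ξ and Cξ + D·𝟏 < γ·𝟏 entrywise; (b) the conditions 'A is Schur and (C(I−A)⁻¹B + D)ᵀ·𝟏 < γ·𝟏 entrywise' hold if and only if there exists p ∈ ℝ^n with p ≥ 0 such that Aᵀp + Cᵀ·𝟏 < p and Bᵀp + Dᵀ·𝟏 < γ·𝟏 entrywise. (Here C(I−A)⁻¹B + D is the static gain of the discrete-time system x(t+1) = Ax(t) + Bw(t), y = Cx + Dw, and the two static-gain conditions express that the ℓ∞-induced gain, respectively the ℓ₁-induced gain, is less than γ.) -/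

import Mathlib

open Matrix

/-- A real square matrix is *Metzler* if all its off-diagonal entries are nonnegative. -/
def Matrix.Metzler {n : ℕ} (A : Matrix (Fin n) (Fin n) ℝ) : Prop :=
  ∀ i j, i ≠ j → 0 ≤ A i j

/-- A real square matrix is *Hurwitz* if every (complex) eigenvalue has negative real part. -/
def Matrix.Hurwitz {n : ℕ} (A : Matrix (Fin n) (Fin n) ℝ) : Prop :=
  ∀ μ ∈ spectrum ℂ (A.map (Complex.ofReal)), μ.re < 0

/-- A real square matrix is *Schur stable* if every (complex) eigenvalue lies strictly
inside the unit circle. -/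
def Matrix.SchurStable {n : ℕ} (A : Matrix (Fin n) (Fin n) ℝ) : Prop :=
  ∀ μ ∈ spectrum ℂ (A.map (Complex.ofReal)), ‖μ‖ < 1

/-!
Schur stability of a real matrix `A` is equivalent to summability of the Neumann series `∑ Aᵏ`:
Gelfand's formula gives one direction, and `Aᵏ → 0` applied to an eigenvector the other. The sum
is `(1 - A)⁻¹`, which is therefore nonnegative when `A` is. For nonnegative `A`, a vector `ξ > 0`
with `Aξ < ξ` dominates `Aᵏ` entrywise by a geometric sequence, so it also forces summability.

Given stability, `ξ = (1 - A)⁻¹(B𝟏 + ε𝟏)` satisfies `Aξ + B𝟏 = ξ - ε𝟏`, and the output bound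
survives for small `ε`. Conversely `ξ - (1 - A)⁻¹B𝟏 = (1 - A)⁻¹((1 - A)ξ - B𝟏) ≥ 0`, so
`C(1 - A)⁻¹B𝟏 ≤ Cξ`. Part (b) is part (a) for the transposed system `(Aᵀ, Cᵀ, Bᵀ, Dᵀ)`.
-/

open Filter Topology

theorem spectrum.summable_pow_of_spectralRadius_lt_one {A : Type*} [NormedRing A]
    [NormedAlgebra ℂ A] [CompleteSpace A] {a : A} (h : spectralRadius ℂ a < 1) :
    Summable (a ^ ·) := by
  obtain ⟨r, hr0, hρr, hr1⟩ := ENNReal.lt_iff_exists_real_btwn.1 h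
  refine .of_norm_bounded_eventually_nat
    (summable_geometric_of_lt_one hr0 (ENNReal.ofReal_lt_one.1 hr1)) ?_
  filter_upwards [(pow_norm_pow_one_div_tendsto_nhds_spectralRadius a).eventually_lt_const hρr,
    eventually_gt_atTop 0] with k hk hk0
  rw [ENNReal.ofReal_lt_ofReal_iff_of_nonneg (by positivity), one_div,
    Real.rpow_inv_lt_iff_of_pos (norm_nonneg _) hr0 (by positivity), Real.rpow_natCast] at hk
  exact hk.le

theorem exists_pos_forall_add_mul_lt {ι : Type*} [Finite ι] {a b : ι → ℝ} (c : ι → ℝ)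
    (h : ∀ i, a i < b i) : ∃ ε ∈ Set.Ioo (0 : ℝ) 1, ∀ i, a i + ε * c i < b i := by
  have hnear : ∀ᶠ ε in 𝓝 (0 : ℝ), ∀ i, a i + ε * c i < b i :=
    eventually_all.2 fun i => Tendsto.eventually_lt_const (h i) <|
      (continuous_const.add (continuous_id.mul continuous_const)).tendsto' 0 (a i) (by simp)
  obtain ⟨ε, hε, hεI⟩ :=
    ((hnear.filter_mono nhdsWithin_le_nhds).and (Ioo_mem_nhdsGT one_pos)).exists
  exact ⟨ε, hεI, hε⟩

namespace Matrix

section Nonneg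

variable {m n R : Type*} [Fintype n] [Semiring R] [PartialOrder R] [IsOrderedRing R]

theorem mulVec_nonneg {A : Matrix m n R} (hA : ∀ i j, 0 ≤ A i j) {v : n → R} (hv : 0 ≤ v) :
    0 ≤ A *ᵥ v :=
  fun i => dotProduct_nonneg_of_nonneg (hA i) hv

theorem mulVec_mono {A : Matrix m n R} (hA : ∀ i j, 0 ≤ A i j) {u v : n → R} (huv : u ≤ v) :
    A *ᵥ u ≤ A *ᵥ v :=
  fun i => dotProduct_le_dotProduct_of_nonneg_left huv (hA i)

end Nonneg

section NeumannSeries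

variable {n : Type*} [Fintype n] [DecidableEq n] {A : Matrix n n ℝ}

theorem isUnit_det_one_sub_of_summable_pow (h : Summable (A ^ ·)) : IsUnit (1 - A).det :=
  isUnit_det_of_right_inverse h.one_sub_mul_tsum_pow

theorem inv_one_sub_apply_nonneg (hA : ∀ i j, 0 ≤ A i j) (h : Summable (A ^ ·)) (i j : n) :
    0 ≤ (1 - A)⁻¹ i j := by
  rw [inv_eq_right_inv h.one_sub_mul_tsum_pow]
  exact (Pi.hasSum.1 (Pi.hasSum.1 h.hasSum i) j).nonneg fun k => pow_apply_nonneg hA k i j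

theorem pow_mulVec_le_of_mulVec_le (hA : ∀ i j, 0 ≤ A i j) {ξ : n → ℝ} {θ : ℝ} (hθ : 0 ≤ θ)
    (h : A *ᵥ ξ ≤ θ • ξ) (k : ℕ) : A ^ k *ᵥ ξ ≤ θ ^ k • ξ := by
  induction k with
  | zero => simp
  | succ k ih =>
    calc A ^ (k + 1) *ᵥ ξ = A *ᵥ (A ^ k *ᵥ ξ) := by rw [pow_succ', mulVec_mulVec]
      _ ≤ A *ᵥ (θ ^ k • ξ) := mulVec_mono hA ih
      _ = θ ^ k • (A *ᵥ ξ) := mulVec_smul A _ ξ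
      _ ≤ θ ^ k • (θ • ξ) := smul_le_smul_of_nonneg_left h (pow_nonneg hθ k)
      _ = θ ^ (k + 1) • ξ := by rw [smul_smul, pow_succ]

theorem summable_pow_of_mulVec_lt (hA : ∀ i j, 0 ≤ A i j) {ξ : n → ℝ} (hξ : ∀ i, 0 < ξ i)
    (hAξ : ∀ i, (A *ᵥ ξ) i < ξ i) : Summable (A ^ ·) := by
  obtain ⟨ε, ⟨hε0, hε1⟩, hεθ⟩ := exists_pos_forall_add_mul_lt ξ hAξ
  have hθ : A *ᵥ ξ ≤ (1 - ε) • ξ := fun i => by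
    simp only [Pi.smul_apply, smul_eq_mul]
    linarith [hεθ i]
  refine Pi.summable.2 fun i => Pi.summable.2 fun j => ?_
  refine .of_nonneg_of_le (fun k => pow_apply_nonneg hA k i j) (fun k => ?_)
    ((summable_geometric_of_lt_one (r := 1 - ε) (by linarith) (by linarith)).mul_left (ξ i / ξ j))
  have hentry : (A ^ k) i j * ξ j ≤ (A ^ k *ᵥ ξ) i :=
    Finset.single_le_sum (f := fun l => (A ^ k) i l * ξ l)
      (fun l _ => mul_nonneg (pow_apply_nonneg hA k i l) (hξ l).le) (Finset.mem_univ j)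
  have hpow := pow_mulVec_le_of_mulVec_le hA (by linarith) hθ k i
  rw [div_mul_eq_mul_div, le_div_iff₀ (hξ j)]
  simp only [Pi.smul_apply, smul_eq_mul] at hpow
  linarith

end NeumannSeries

theorem spectrum_transpose {n R : Type*} [Fintype n] [DecidableEq n] [CommRing R]
    (M : Matrix n n R) : spectrum R Mᵀ = spectrum R M := by
  ext μ
  simp only [spectrum.mem_iff, isUnit_iff_isUnit_det, Algebra.algebraMap_eq_smul_one]
  rw [← det_transpose, transpose_sub, transpose_smul, transpose_one, transpose_transpose]

theorem schurStable_transpose_iff {n : ℕ} {A : Matrix (Fin n) (Fin n) ℝ} :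
    Aᵀ.SchurStable ↔ A.SchurStable := by
  rw [SchurStable, SchurStable, transpose_map, spectrum_transpose]

section StaticGain

variable {n m r R : Type*} [Fintype n] [DecidableEq n] [CommRing R]

noncomputable def staticGain (A : Matrix n n R) (B : Matrix n m R) (C : Matrix r n R)
    (D : Matrix r m R) : Matrix r m R :=
  C * (1 - A)⁻¹ * B + D

theorem staticGain_transpose (A : Matrix n n R) (B : Matrix n m R) (C : Matrix r n R)
    (D : Matrix r m R) : (staticGain A B C D)ᵀ = staticGain Aᵀ Cᵀ Bᵀ Dᵀ := by
  rw [staticGain, staticGain, transpose_add, transpose_mul, transpose_mul, transpose_nonsing_inv,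
    transpose_sub, transpose_one, Matrix.mul_assoc]

theorem staticGain_mulVec [Fintype m] (A : Matrix n n R) (B : Matrix n m R) (C : Matrix r n R)
    (D : Matrix r m R) (v : m → R) :
    staticGain A B C D *ᵥ v = C *ᵥ (1 - A)⁻¹ *ᵥ B *ᵥ v + D *ᵥ v := by
  rw [staticGain, add_mulVec, mulVec_mulVec, mulVec_mulVec, Matrix.mul_assoc]

end StaticGain

variable {n : ℕ}

theorem schurStable_of_summable_pow {A : Matrix (Fin n) (Fin n) ℝ} (h : Summable (A ^ ·)) :
    A.SchurStable := by
  intro μ hμ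
  rw [← spectrum_toLin', ← Module.End.hasEigenvalue_iff_mem_spectrum] at hμ
  obtain ⟨v, hv⟩ := hμ.exists_hasEigenvector
  obtain ⟨j, hj⟩ : ∃ j, v j ≠ 0 := Function.ne_iff.1 hv.2
  have hpow (k : ℕ) : ((A.map Complex.ofReal) ^ k *ᵥ v) j = μ ^ k * v j := by
    simpa [← Matrix.toLin'_pow] using congrFun (hv.pow_apply k) j
  have hlim : Tendsto (fun k => ((A.map Complex.ofReal) ^ k *ᵥ v) j) atTop (𝓝 0) := by
    have hcont : Continuous fun N : Matrix (Fin n) (Fin n) ℝ => (N.map Complex.ofReal *ᵥ v) j :=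
      (continuous_apply j).comp
        ((continuous_id.matrix_map Complex.continuous_ofReal).matrix_mulVec continuous_const)
    have := (hcont.tendsto 0).comp h.tendsto_atTop_zero
    have hmap (k : ℕ) : (A ^ k).map Complex.ofReal = A.map Complex.ofReal ^ k :=
      Matrix.map_pow A Complex.ofRealHom k
    simpa [Function.comp_def, hmap] using this
  simp_rw [hpow] at hlim
  exact tendsto_pow_atTop_nhds_zero_iff_norm_lt_one.1 (by simpa [hj] using hlim.mul_const (v j)⁻¹)

section LinftyOpNorm

-- Gelfand's formula needs some Banach-algebra norm on matrices; any one will do.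
attribute [local instance] Matrix.linftyOpNormedRing Matrix.linftyOpNormedAlgebra

theorem summable_pow_of_schurStable {A : Matrix (Fin n) (Fin n) ℝ} (hA : A.SchurStable) :
    Summable (A ^ ·) := by
  have : CompleteSpace (Matrix (Fin n) (Fin n) ℂ) := FiniteDimensional.complete ℂ _
  have hρ : spectralRadius ℂ (A.map Complex.ofReal) < 1 := by
    rcases (spectrum ℂ (A.map Complex.ofReal)).eq_empty_or_nonempty with h | h
    · simp [spectralRadius, h]
    · simpa using spectrum.spectralRadius_lt_of_forall_lt_of_nonempty h (r := 1)
        fun μ hμ => by simpa [← NNReal.coe_lt_coe] using hA μ hμ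
  have hM := spectrum.summable_pow_of_spectralRadius_lt_one hρ
  refine Pi.summable.2 fun i => Pi.summable.2 fun j => Complex.summable_ofReal.1 ?_
  convert Pi.summable.1 (Pi.summable.1 hM i) j using 2 with k
  exact congrFun₂ (Matrix.map_pow A Complex.ofRealHom k) i j

end LinftyOpNorm

variable {m r : Type*} [Fintype m] {A : Matrix (Fin n) (Fin n) ℝ}
  {B : Matrix (Fin n) m ℝ} {C : Matrix r (Fin n) ℝ}

theorem exists_nonneg_vec_of_schurStable_of_staticGain_lt [Finite r] (D : Matrix r m ℝ)
    (hA : ∀ i j, 0 ≤ A i j) (hB : ∀ i j, 0 ≤ B i j) {γ : ℝ} (hS : A.SchurStable)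
    (hγ : ∀ i, (staticGain A B C D *ᵥ 1) i < γ) :
    ∃ ξ : Fin n → ℝ, 0 ≤ ξ ∧ (∀ i, (A *ᵥ ξ + B *ᵥ 1) i < ξ i) ∧
      ∀ i, (C *ᵥ ξ + D *ᵥ 1) i < γ := by
  have hsum := summable_pow_of_schurStable hS
  set S := (1 - A)⁻¹
  obtain ⟨ε, ⟨hε, -⟩, hεγ⟩ := exists_pos_forall_add_mul_lt (C *ᵥ S *ᵥ 1) hγ
  set ξ := S *ᵥ (B *ᵥ 1 + ε • 1) with hξdef
  have hξ : (1 - A) *ᵥ ξ = B *ᵥ 1 + ε • 1 := by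
    rw [mulVec_mulVec, mul_nonsing_inv _ (isUnit_det_one_sub_of_summable_pow hsum), one_mulVec]
  refine ⟨ξ, mulVec_nonneg (inv_one_sub_apply_nonneg hA hsum)
    (add_nonneg (mulVec_nonneg hB zero_le_one) (smul_nonneg hε.le zero_le_one)), fun i => ?_,
    fun i => ?_⟩
  · have := congrFun hξ i
    simp only [sub_mulVec, one_mulVec, Pi.sub_apply, Pi.add_apply, Pi.smul_apply, Pi.one_apply,
      smul_eq_mul, mul_one] at this ⊢
    linarith
  · have hCξ : C *ᵥ ξ + D *ᵥ 1 = staticGain A B C D *ᵥ 1 + ε • (C *ᵥ S *ᵥ 1) := by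
      rw [staticGain_mulVec, hξdef, mulVec_add, mulVec_add, mulVec_smul, mulVec_smul]
      abel
    rw [hCξ]
    exact hεγ i

theorem schurStable_and_staticGain_lt_of_nonneg_vec (D : Matrix r m ℝ) (hA : ∀ i j, 0 ≤ A i j)
    (hB : ∀ i j, 0 ≤ B i j) (hC : ∀ i j, 0 ≤ C i j) {γ : ℝ} {ξ : Fin n → ℝ} (hξ0 : 0 ≤ ξ)
    (hξ : ∀ i, (A *ᵥ ξ + B *ᵥ 1) i < ξ i) (hγ : ∀ i, (C *ᵥ ξ + D *ᵥ 1) i < γ) :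
    A.SchurStable ∧ ∀ i, (staticGain A B C D *ᵥ 1) i < γ := by
  have hB1 : ∀ i, 0 ≤ (B *ᵥ 1) i := mulVec_nonneg hB zero_le_one
  have hAξ (i : Fin n) : (A *ᵥ ξ) i < ξ i := by
    have := hξ i
    rw [Pi.add_apply] at this
    linarith [hB1 i]
  have hξpos (i : Fin n) : 0 < ξ i := (mulVec_nonneg hA hξ0 i).trans_lt (hAξ i)
  have hsum := summable_pow_of_mulVec_lt hA hξpos hAξ
  have hunit := isUnit_det_one_sub_of_summable_pow hsum
  have hle : (1 - A)⁻¹ *ᵥ (B *ᵥ 1) ≤ ξ := by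
    have hslack : 0 ≤ (1 - A) *ᵥ ξ - B *ᵥ 1 := fun i => by
      have := hξ i
      simp only [sub_mulVec, one_mulVec, Pi.sub_apply, Pi.add_apply, Pi.zero_apply] at this ⊢
      linarith
    have := mulVec_nonneg (inv_one_sub_apply_nonneg hA hsum) hslack
    rwa [mulVec_sub, mulVec_mulVec, nonsing_inv_mul _ hunit, one_mulVec, sub_nonneg] at this
  refine ⟨schurStable_of_summable_pow hsum, fun i => ?_⟩
  calc (staticGain A B C D *ᵥ 1) i = (C *ᵥ (1 - A)⁻¹ *ᵥ B *ᵥ 1 + D *ᵥ 1) i := by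
        rw [staticGain_mulVec]
    _ ≤ (C *ᵥ ξ + D *ᵥ 1) i := add_le_add_left (mulVec_mono hC hle i) _
    _ < γ := hγ i

theorem schurStable_and_staticGain_lt_iff [Finite r] (D : Matrix r m ℝ)
    (hA : ∀ i j, 0 ≤ A i j) (hB : ∀ i j, 0 ≤ B i j) (hC : ∀ i j, 0 ≤ C i j) (γ : ℝ) :
    (A.SchurStable ∧ ∀ i, (staticGain A B C D *ᵥ 1) i < γ) ↔
      ∃ ξ : Fin n → ℝ, 0 ≤ ξ ∧ (∀ i, (A *ᵥ ξ + B *ᵥ 1) i < ξ i) ∧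
        ∀ i, (C *ᵥ ξ + D *ᵥ 1) i < γ :=
  ⟨fun ⟨hS, hγ⟩ => exists_nonneg_vec_of_schurStable_of_staticGain_lt D hA hB hS hγ,
    fun ⟨_, hξ0, hξ, hγ⟩ => schurStable_and_staticGain_lt_of_nonneg_vec D hA hB hC hξ0 hξ hγ⟩

end Matrix

theorem discrete_positive_system_gain_iff_general {n m r : ℕ}
    (A : Matrix (Fin n) (Fin n) ℝ) (B : Matrix (Fin n) (Fin m) ℝ)
    (C : Matrix (Fin r) (Fin n) ℝ) (D : Matrix (Fin r) (Fin m) ℝ)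
    (hA : ∀ i j, 0 ≤ A i j) (hB : ∀ i j, 0 ≤ B i j) (hC : ∀ i j, 0 ≤ C i j)
    (γ : ℝ) :
    ((A.SchurStable ∧ ∀ i, ((C * (1 - A)⁻¹ * B + D) *ᵥ fun _ => (1 : ℝ)) i < γ) ↔
      (∃ ξ : Fin n → ℝ, (∀ i, 0 ≤ ξ i) ∧
        (∀ i, (A *ᵥ ξ + B *ᵥ fun _ => (1 : ℝ)) i < ξ i) ∧
        (∀ i, (C *ᵥ ξ + D *ᵥ fun _ => (1 : ℝ)) i < γ))) ∧
    ((A.SchurStable ∧ ∀ i, ((C * (1 - A)⁻¹ * B + D)ᵀ *ᵥ fun _ => (1 : ℝ)) i < γ) ↔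
      (∃ p : Fin n → ℝ, (∀ i, 0 ≤ p i) ∧
        (∀ i, (Aᵀ *ᵥ p + Cᵀ *ᵥ fun _ => (1 : ℝ)) i < p i) ∧
        (∀ i, (Bᵀ *ᵥ p + Dᵀ *ᵥ fun _ => (1 : ℝ)) i < γ))) := by
  refine ⟨schurStable_and_staticGain_lt_iff D hA hB hC γ, ?_⟩
  have hdual := schurStable_and_staticGain_lt_iff (A := Aᵀ) (B := Cᵀ) (C := Bᵀ) Dᵀ
    (fun i j => hA j i) (fun i j => hC j i) (fun i j => hB j i) γ
  rwa [schurStable_transpose_iff, ← staticGain_transpose] at hdual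

/-- Discrete-time performance of positive systems: for nonnegative `A, B, C, D`,
(a) `A` is Schur with `(C(I-A)⁻¹B + D) 𝟏 < γ 𝟏` iff there is `ξ ≥ 0` with
`Aξ + B𝟏 < ξ` and `Cξ + D𝟏 < γ𝟏`; (b) `A` is Schur with `(C(I-A)⁻¹B + D)ᵀ 𝟏 < γ 𝟏`
iff there is `p ≥ 0` with `Aᵀp + Cᵀ𝟏 < p` and `Bᵀp + Dᵀ𝟏 < γ𝟏` (all entrywise). -/
theorem discrete_positive_system_gain_iff {n m r : ℕ}
    (A : Matrix (Fin n) (Fin n) ℝ) (B : Matrix (Fin n) (Fin m) ℝ)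
    (C : Matrix (Fin r) (Fin n) ℝ) (D : Matrix (Fin r) (Fin m) ℝ)
    (hA : ∀ i j, 0 ≤ A i j) (hB : ∀ i j, 0 ≤ B i j) (hC : ∀ i j, 0 ≤ C i j)
    (hD : ∀ i j, 0 ≤ D i j) (γ : ℝ) (hγ : 0 < γ) :
    ((A.SchurStable ∧ ∀ i, ((C * (1 - A)⁻¹ * B + D) *ᵥ fun _ => (1 : ℝ)) i < γ) ↔
      (∃ ξ : Fin n → ℝ, (∀ i, 0 ≤ ξ i) ∧
        (∀ i, (A *ᵥ ξ + B *ᵥ fun _ => (1 : ℝ)) i < ξ i) ∧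
        (∀ i, (C *ᵥ ξ + D *ᵥ fun _ => (1 : ℝ)) i < γ))) ∧
    ((A.SchurStable ∧ ∀ i, ((C * (1 - A)⁻¹ * B + D)ᵀ *ᵥ fun _ => (1 : ℝ)) i < γ) ↔
      (∃ p : Fin n → ℝ, (∀ i, 0 ≤ p i) ∧
        (∀ i, (Aᵀ *ᵥ p + Cᵀ *ᵥ fun _ => (1 : ℝ)) i < p i) ∧
        (∀ i, (Bᵀ *ᵥ p + Dᵀ *ᵥ fun _ => (1 : ℝ)) i < γ))) :=
  discrete_positive_system_gain_iff_general A B C D hA hB hC γ
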